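/- Let k be a field and n ≥ 0. Let A_{n+1} be the linear quiver with vertex set {1,…,n+1} and arrow set {1,…,n}, where arrow i has start i and terminus i+1. Let s^*, t^* : (Γ₀ → k) → (Γ₁ → k) be precomposition with s and t on the spaces of all k-valued functions. Then there exist k-linear isomorphisms ψ₁ : (Γ₀ → k) → V_n* and ψ₀ : (Γ₁ → k) → V_{n−1}* such that ψ₀ ∘ s^* = x^* ∘ ψ₁ and ψ₀ ∘ t^* = y^* ∘ ψ₁, where x^*, y^* : V_n* → V_{n−1}* are the duals of the multiplication maps V_{n−1} → V_n by x and by y; that is, k^{A_{n+1}} is isomorphic as a Kronecker representation to I(n) = (V_n* ⇉ V_{n−1}*; x^*, y^*). -/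

import Mathlib

open MvPolynomial

noncomputable section

/-- Polynomials in two variables `x = X 0`, `y = X 1`. -/
abbrev Poly2 (k : Type) [Field k] := MvPolynomial (Fin 2) k

/-- `Vd k n` is the space `V_n` of homogeneous polynomials of degree `n`. -/
abbrev Vd (k : Type) [Field k] (n : ℕ) : Submodule k (Poly2 k) :=
  homogeneousSubmodule (Fin 2) k n

/-- `Vm k n` is the space `V_{n-1}`, with `V_{-1} = 0`. -/
abbrev Vm (k : Type) [Field k] : ℕ → Submodule k (Poly2 k)
  | 0 => ⊥
  | n+1 => Vd k n

theorem Vm_mul_mem (k : Type) [Field k] (n : ℕ) {c : Poly2 k} (hc : c.IsHomogeneous 1)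
    {g : Poly2 k} (hg : g ∈ Vm k n) : c * g ∈ Vd k n := by
  cases n with
  | zero =>
      rw [Submodule.mem_bot] at hg
      subst hg
      rw [mul_zero]
      exact Submodule.zero_mem (Vd k 0)
  | succ m =>
      rw [mem_homogeneousSubmodule] at hg ⊢
      simpa [Nat.add_comm] using hc.mul hg

/-- Multiplication by the variable `X j`, as a linear map `V_{n-1} → V_n`. -/
def mulVar (k : Type) [Field k] (n : ℕ) (j : Fin 2) : Vm k n →ₗ[k] Vd k n where
  toFun g := ⟨X j * g.1, Vm_mul_mem k n (isHomogeneous_X k j) g.2⟩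
  map_add' a b := by ext; simp [mul_add]
  map_smul' c a := by ext; simp [mul_smul_comm]

/-- Multiplication by `x`. -/
def mulX (k : Type) [Field k] (n : ℕ) : Vm k n →ₗ[k] Vd k n := mulVar k n 0
/-- Multiplication by `y`. -/
def mulY (k : Type) [Field k] (n : ℕ) : Vm k n →ₗ[k] Vd k n := mulVar k n 1

end

/-!
In the monomial bases `x ^ (n - i) * y ^ i` of `V_n` and `x ^ (n - 1 - i) * y ^ i` of `V_{n-1}`,
multiplication by `x` sends the `i`-th basis vector to the `i`-th one and multiplication by `y`
sends it to the `(i + 1)`-th one. Identifying `V_n*` and `V_{n-1}*` with coordinate spaces through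
these bases, the dual maps `x^*` and `y^*` therefore become precomposition with `Fin.castSucc` and
`Fin.succ`, which are exactly `s^*` and `t^*` for the linear quiver.
-/

noncomputable section

open MvPolynomial

theorem MvPolynomial.coe_basisRestrictSupport {σ R : Type*} [CommSemiring R]
    (s : Set (σ →₀ ℕ)) (i : s) :
    (basisRestrictSupport R s i : MvPolynomial σ R) = monomial i 1 := by
  classical
  have hmem : monomial (i : σ →₀ ℕ) (1 : R) ∈ restrictSupport R s := by
    rw [restrictSupport_eq_span]
    exact Submodule.subset_span ⟨i, i.2, rfl⟩
  suffices basisRestrictSupport R s i = ⟨_, hmem⟩ from congrArg Subtype.val this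
  rw [Module.Basis.apply_eq_iff]
  ext j
  change coeff (j : σ →₀ ℕ) (monomial i (1 : R)) = _
  simp only [coeff_monomial, Finsupp.single_apply, Subtype.ext_iff]

theorem Module.Basis.dualMap_constr {R M N ι κ : Type*} [CommSemiring R]
    [AddCommMonoid M] [Module R M] [AddCommMonoid N] [Module R N]
    (b : Basis ι R M) (b' : Basis κ R N) (f : N →ₗ[R] M) (σ : κ → ι)
    (hf : ∀ j, f (b' j) = b (σ j)) (c : ι → R) :
    f.dualMap (b.constr R c) = b'.constr R (LinearMap.funLeft R R σ c) :=
  b'.ext fun j => by simp [hf]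

def monomialExponent (n : ℕ) (i : Fin (n + 1)) : Fin 2 →₀ ℕ :=
  .single 0 (n - i) + .single 1 i

@[simp]
theorem monomialExponent_zero (n : ℕ) (i : Fin (n + 1)) : monomialExponent n i 0 = n - i := by
  simp [monomialExponent]

@[simp]
theorem monomialExponent_one (n : ℕ) (i : Fin (n + 1)) : monomialExponent n i 1 = i := by
  simp [monomialExponent]

theorem Finsupp.degree_fin_two (d : Fin 2 →₀ ℕ) : d.degree = d 0 + d 1 := by
  rw [Finsupp.degree_eq_sum, Fin.sum_univ_two]

def monomialExponentEquiv (n : ℕ) : Fin (n + 1) ≃ {d : Fin 2 →₀ ℕ | d.degree = n} where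
  toFun i := ⟨monomialExponent n i, by
    simp only [Set.mem_ofPred_eq, Finsupp.degree_fin_two, monomialExponent_zero,
      monomialExponent_one]
    omega⟩
  invFun d := ⟨d.1 1, by
    have := d.2
    simp only [Set.mem_ofPred_eq, Finsupp.degree_fin_two] at this
    omega⟩
  left_inv i := by ext; simp
  right_inv d := by
    have := d.2
    simp only [Set.mem_ofPred_eq, Finsupp.degree_fin_two] at this
    ext j
    fin_cases j <;> simp
    omega

section

variable (k : Type) [Field k]

def monomialBasis (n : ℕ) : Module.Basis (Fin (n + 1)) k (Vd k n) :=
  ((basisRestrictSupport k _).reindex (monomialExponentEquiv n).symm).map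
    (LinearEquiv.ofEq _ _ (homogeneousSubmodule_eq_finsupp_supported (Fin 2) k n).symm)

theorem coe_monomialBasis (n : ℕ) (i : Fin (n + 1)) :
    (monomialBasis k n i : Poly2 k) = monomial (monomialExponent n i) 1 := by
  simp only [monomialBasis, Module.Basis.map_apply, Module.Basis.reindex_apply, Equiv.symm_symm]
  exact coe_basisRestrictSupport (R := k) _ (monomialExponentEquiv n i)

def monomialBasisVm : (n : ℕ) → Module.Basis (Fin n) k (Vm k n)
  | 0 => Module.Basis.empty _
  | n + 1 => monomialBasis k n

theorem mulVar_monomialBasis (n : ℕ) (j : Fin 2) (i : Fin (n + 1)) (i' : Fin (n + 2))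
    (h : Finsupp.single j 1 + monomialExponent n i = monomialExponent (n + 1) i') :
    mulVar k (n + 1) j (monomialBasis k n i) = monomialBasis k (n + 1) i' := by
  apply Subtype.ext
  change X j * (monomialBasis k n i : Poly2 k) = _
  rw [coe_monomialBasis, coe_monomialBasis, X, monomial_mul, one_mul, h]

theorem mulX_monomialBasisVm (n : ℕ) (i : Fin n) :
    mulX k n (monomialBasisVm k n i) = monomialBasis k n i.castSucc := by
  cases n with
  | zero => exact i.elim0
  | succ n =>
    apply mulVar_monomialBasis
    ext l
    fin_cases l <;> simp
    omega

theorem mulY_monomialBasisVm (n : ℕ) (i : Fin n) :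
    mulY k n (monomialBasisVm k n i) = monomialBasis k n i.succ := by
  cases n with
  | zero => exact i.elim0
  | succ n =>
    apply mulVar_monomialBasis
    ext l
    fin_cases l <;> simp
    omega

end

/-- for the linear quiver `A_{n+1}` (vertices `Fin (n+1)`, arrows
`Fin n`, arrow `i` from `i` to `i+1`), the representation `k^{A_{n+1}}` given
by the precomposition maps `s^*, t^* : (Fin (n+1) → k) → (Fin n → k)` is
isomorphic, as a Kronecker representation, to
`I(n) = (V_n* ⇉ V_{n-1}*; x^*, y^*)`. -/
theorem stmt8 (k : Type) [Field k] (n : ℕ) :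
    ∃ (ψ₁ : (Fin (n+1) → k) ≃ₗ[k] Module.Dual k (Vd k n))
      (ψ₀ : (Fin n → k) ≃ₗ[k] Module.Dual k (Vm k n)),
      (∀ c : Fin (n+1) → k,
        ψ₀ (LinearMap.funLeft k k (Fin.castSucc : Fin n → Fin (n+1)) c)
          = (mulX k n).dualMap (ψ₁ c)) ∧
      (∀ c : Fin (n+1) → k,
        ψ₀ (LinearMap.funLeft k k (Fin.succ : Fin n → Fin (n+1)) c)
          = (mulY k n).dualMap (ψ₁ c)) :=
  ⟨(monomialBasis k n).constr k, (monomialBasisVm k n).constr k,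
    fun c => (Module.Basis.dualMap_constr _ _ _ _ (mulX_monomialBasisVm k n) c).symm,
    fun c => (Module.Basis.dualMap_constr _ _ _ _ (mulY_monomialBasisVm k n) c).symm⟩

end
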